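/- arXiv:math/0507398 — 2 statements merged into one kernel-verified Lean document; each statement's English description precedes it below -/
import Mathlib

section
/- Let v₀ ∈ V be nonzero, let W ⊂ V be a 5-dimensional subspace with V = ℂv₀ ⊕ W, and let w ∈ W. Then F_{v₀+w} = {v₀∧α + w∧α : α ∈ ⋀²W}; that is, with respect to the decomposition ⋀³V = (v₀∧⋀²W) ⊕ ⋀³W, the Lagrangian subspace F_{v₀+w} is the graph of the linear map v₀∧⋀²W → ⋀³W sending v₀∧α to w∧α. Moreover the quadratic form on ⋀²W associated to this graph via the pairing (α,β) ↦ vol(v₀∧α∧β) is α ↦ vol(v₀∧w∧α∧α). -/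
/-!
Write `u = v₀ + w`. Since `u ∧ u = 0`, the product `u ∧ a ∧ b` only depends on `a` and `b`
modulo `ℂu`, and `W` is still a complement of `ℂu` because `w ∈ W`; hence
`u ∧ ⋀²V = u ∧ ⋀²W = {v₀∧α + w∧α : α ∈ ⋀²W}`. For the quadratic form, `α ∈ ⋀²W` has even
degree, so it commutes with `w` in the exterior algebra.
-/

open ExteriorAlgebra

/-- The subspace `F_v = v ∧ ⋀²V = {v∧β : β ∈ ⋀²V}` of `⋀³V`, as a submodule of the
exterior algebra. -/
noncomputable def Fsub {V : Type*} [AddCommGroup V] [Module ℂ V] (v : V) :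
    Submodule ℂ (ExteriorAlgebra ℂ V) :=
  (⋀[ℂ]^2 V).map (LinearMap.mulLeft ℂ (ExteriorAlgebra.ι ℂ v))

/-- The image of `⋀ᵏW` in the exterior algebra of `V`, for a subspace `W ⊆ V`. -/
noncomputable def extSub {V : Type*} [AddCommGroup V] [Module ℂ V]
    (W : Submodule ℂ V) (k : ℕ) : Submodule ℂ (ExteriorAlgebra ℂ V) :=
  (⋀[ℂ]^k ↥W).map (ExteriorAlgebra.map W.subtype).toLinearMap

namespace ExteriorAlgebra

variable {R M : Type*} [CommRing R] [AddCommGroup M] [Module R M]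

theorem ι_mul_ι_anticomm (a b : M) : ι R a * ι R b = -(ι R b * ι R a) :=
  eq_neg_of_add_eq_zero_left (ι_add_mul_swap a b)

theorem ι_mul_ι_mul_ι_self (a b : M) : ι R a * (ι R b * ι R a) = 0 := by
  rw [ι_mul_ι_anticomm b, mul_neg, ← mul_assoc, ι_sq_zero, zero_mul, neg_zero]

theorem ι_mul_ι_mul_ι_comm (a b c : M) :
    ι R a * ι R b * ι R c = ι R c * (ι R a * ι R b) := by
  rw [mul_assoc, ι_mul_ι_anticomm b c, mul_neg, ← mul_assoc, ι_mul_ι_anticomm a c, neg_mul,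
    neg_neg, mul_assoc]

theorem mul_ι_comm_of_mem_exteriorPower_two {x : ExteriorAlgebra R M} (hx : x ∈ ⋀[R]^2 M)
    (y : M) : x * ι R y = ι R y * x := by
  suffices ⋀[R]^2 M ≤ (Subalgebra.centralizer R {ι R y}).toSubmodule by
    simpa [Subalgebra.mem_centralizer_iff, eq_comm] using this hx
  rw [exteriorPower, pow_two, Submodule.mul_le]
  rintro _ ⟨a, rfl⟩ _ ⟨b, rfl⟩
  simp [Subalgebra.mem_centralizer_iff, ι_mul_ι_mul_ι_comm]

theorem ι_mul_ι_mul_ι_add_smul (u a b : M) (c d : R) :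
    ι R u * (ι R (a + c • u) * ι R (b + d • u)) = ι R u * (ι R a * ι R b) := by
  have hu : ι R u * ι R (a + c • u) = ι R u * ι R a := by simp [mul_add]
  rw [← mul_assoc, hu, mul_assoc]
  simp [mul_add, ι_mul_ι_mul_ι_self]

theorem map_exteriorPower_eq_pow {N : Type*} [AddCommGroup N] [Module R N]
    (f : N →ₗ[R] M) (k : ℕ) :
    (⋀[R]^k N).map (map f).toLinearMap = (LinearMap.range f).map (ι R) ^ k := by
  rw [exteriorPower, Submodule.map_pow, ← LinearMap.range_comp, map_comp_ι, LinearMap.range_comp]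

theorem map_mulLeft_ι_exteriorPower_two {u : M} {W : Submodule R M}
    (h : Codisjoint (R ∙ u) W) :
    (⋀[R]^2 M).map (LinearMap.mulLeft R (ι R u)) =
      (W.map (ι R) ^ 2).map (LinearMap.mulLeft R (ι R u)) := by
  refine le_antisymm ?_ (Submodule.map_mono (pow_le_pow_left' LinearMap.map_le_range 2))
  have hdecomp : ∀ a : M, ∃ a' ∈ W, ∃ c : R, a = a' + c • u := by
    intro a
    obtain ⟨_, hp, a', ha', rfl⟩ := Submodule.mem_sup.mp (h.eq_top ▸ Submodule.mem_top : a ∈ _)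
    obtain ⟨c, rfl⟩ := Submodule.mem_span_singleton.mp hp
    exact ⟨a', ha', c, add_comm _ _⟩
  rw [Submodule.map_le_iff_le_comap, exteriorPower, pow_two, Submodule.mul_le]
  rintro _ ⟨a, rfl⟩ _ ⟨b, rfl⟩
  obtain ⟨a', ha', c, rfl⟩ := hdecomp a
  obtain ⟨b', hb', d, rfl⟩ := hdecomp b
  refine ⟨ι R a' * ι R b', ?_, (ι_mul_ι_mul_ι_add_smul u a' b' c d).symm⟩
  rw [pow_two]
  exact Submodule.mul_mem_mul (Submodule.mem_map_of_mem ha') (Submodule.mem_map_of_mem hb')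

end ExteriorAlgebra

theorem Submodule.codisjoint_span_singleton_add {R M : Type*} [Ring R] [AddCommGroup M]
    [Module R M] {v w : M} {W : Submodule R M} (h : Codisjoint (R ∙ v) W) (hw : w ∈ W) :
    Codisjoint (R ∙ (v + w)) W := by
  rw [codisjoint_iff_le_sup, ← h.eq_top, sup_le_iff, span_singleton_le_iff_mem]
  refine ⟨?_, le_sup_right⟩
  simpa using sub_mem (mem_sup_left (mem_span_singleton_self (v + w))) (mem_sup_right hw)

theorem extSub_eq_pow {V : Type*} [AddCommGroup V] [Module ℂ V] (W : Submodule ℂ V) (k : ℕ) :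
    extSub W k = W.map (ι ℂ) ^ k := by
  rw [extSub, map_exteriorPower_eq_pow, Submodule.range_subtype]

theorem extSub_le_exteriorPower {V : Type*} [AddCommGroup V] [Module ℂ V] (W : Submodule ℂ V)
    (k : ℕ) : extSub W k ≤ ⋀[ℂ]^k V := by
  rw [extSub_eq_pow]
  exact pow_le_pow_left' LinearMap.map_le_range k

theorem Fsub_eq_map_extSub {V : Type*} [AddCommGroup V] [Module ℂ V] {u : V}
    {W : Submodule ℂ V} (h : Codisjoint (ℂ ∙ u) W) :
    Fsub u = (extSub W 2).map (LinearMap.mulLeft ℂ (ι ℂ u)) := by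
  rw [Fsub, extSub_eq_pow, map_mulLeft_ι_exteriorPower_two h]

theorem stmt4_general (V : Type*) [AddCommGroup V] [Module ℂ V]
    (vol : ExteriorAlgebra ℂ V →ₗ[ℂ] ℂ) (v₀ : V) (W : Submodule ℂ V)
    (hcompl : IsCompl (ℂ ∙ v₀) W) (w : V) (hw : w ∈ W) :
    Fsub (v₀ + w) =
      (extSub W 2).map (LinearMap.mulLeft ℂ (ι ℂ v₀) + LinearMap.mulLeft ℂ (ι ℂ w)) ∧
    ∀ α ∈ extSub W 2,
      vol (ι ℂ v₀ * (α * (ι ℂ w * α))) = vol (ι ℂ v₀ * (ι ℂ w * (α * α))) := by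
  have hmulLeft : LinearMap.mulLeft ℂ (ι ℂ v₀) + LinearMap.mulLeft ℂ (ι ℂ w) =
      LinearMap.mulLeft ℂ (ι ℂ (v₀ + w)) :=
    LinearMap.ext fun x => by simp [add_mul]
  refine ⟨?_, fun α hα => ?_⟩
  · rw [hmulLeft]
    exact Fsub_eq_map_extSub (Submodule.codisjoint_span_singleton_add hcompl.codisjoint hw)
  · rw [← mul_assoc α, mul_ι_comm_of_mem_exteriorPower_two (extSub_le_exteriorPower W 2 hα),
      mul_assoc]

/-- For `v₀ ≠ 0`, a 5-dimensional complement `W` of `ℂv₀` and `w ∈ W`,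
the Lagrangian `F_{v₀+w}` equals `{v₀∧α + w∧α : α ∈ ⋀²W}`, i.e. it is the graph of
`v₀∧α ↦ w∧α` with respect to `⋀³V = (v₀∧⋀²W) ⊕ ⋀³W`; moreover the quadratic form on
`⋀²W` associated to this graph via the pairing `(α,β) ↦ vol(v₀∧α∧β)` is
`α ↦ vol(v₀∧w∧α∧α)`. -/
theorem stmt4 (V : Type*) [AddCommGroup V] [Module ℂ V] [FiniteDimensional ℂ V]
    (hV : Module.finrank ℂ V = 6)
    (vol : ExteriorAlgebra ℂ V →ₗ[ℂ] ℂ)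
    (hvol : Function.Bijective fun x : ⋀[ℂ]^6 V => vol x)
    (v₀ : V) (hv₀ : v₀ ≠ 0)
    (W : Submodule ℂ V) (hW : Module.finrank ℂ W = 5)
    (hcompl : IsCompl (ℂ ∙ v₀) W) (w : V) (hw : w ∈ W) :
    Fsub (v₀ + w) =
      (extSub W 2).map (LinearMap.mulLeft ℂ (ι ℂ v₀) + LinearMap.mulLeft ℂ (ι ℂ w)) ∧
    ∀ α ∈ extSub W 2,
      vol (ι ℂ v₀ * (α * (ι ℂ w * α))) = vol (ι ℂ v₀ * (ι ℂ w * (α * α))) :=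
  stmt4_general V vol v₀ W hcompl w hw
end

section
/- Let (E, ω) be a finite-dimensional complex vector space equipped with a symplectic (alternating nondegenerate) bilinear form, and let A, B ⊆ E be Lagrangian subspaces. Then there exists a Lagrangian subspace C ⊆ E transversal to both, i.e. with C ∩ A = {0} and C ∩ B = {0}. -/
/-!
Grow an isotropic subspace `C` transversal to `A` and `B` one vector at a time. While
`2 * dim C < dim E`, the orthogonal `Cᗮ` is not contained in `C + A`: otherwise a nonzero vector of
`Cᗮ ∩ A`, which exists for dimension reasons, would be orthogonal to all of `Cᗮ`, hence lie in
`Cᗮᗮ = C`. Likewise for `B`, and since a vector space is not a union of two proper subspaces some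
`v ∈ Cᗮ` avoids both `C + A` and `C + B`; then `C + Kv` is again isotropic and transversal to
`A` and `B`.
-/

open Module Submodule

theorem Submodule.exists_mem_notMem_notMem_of_not_le {R M : Type*} [Ring R] [AddCommGroup M]
    [Module R M] {p q r : Submodule R M} (hq : ¬p ≤ q) (hr : ¬p ≤ r) :
    ∃ v ∈ p, v ∉ q ∧ v ∉ r := by
  obtain ⟨a, hap, haq⟩ := SetLike.not_le_iff_exists.mp hq
  obtain ⟨b, hbp, hbr⟩ := SetLike.not_le_iff_exists.mp hr
  by_cases har : a ∈ r
  · by_cases hbq : b ∈ q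
    · exact ⟨a + b, add_mem hap hbp, fun h => haq ((q.add_mem_iff_left hbq).mp h),
        fun h => hbr ((r.add_mem_iff_right har).mp h)⟩
    · exact ⟨b, hbp, hbq, hbr⟩
  · exact ⟨a, hap, haq, har⟩

theorem Submodule.disjoint_sup_span_singleton {K M : Type*} [DivisionRing K] [AddCommGroup M]
    [Module K M] {p q : Submodule K M} {v : M} (hpq : Disjoint p q) (hv : v ∉ p ⊔ q) :
    Disjoint (p ⊔ K ∙ v) q := by
  rw [sup_comm]
  exact hpq.disjoint_sup_left_of_disjoint_sup_right (disjoint_span_singleton_of_notMem hv).symm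

namespace LinearMap.BilinForm

variable {K E : Type*} [Field K] [AddCommGroup E] [Module K E] {B : LinearMap.BilinForm K E}

def IsIsotropic (B : LinearMap.BilinForm K E) (W : Submodule K E) : Prop :=
  ∀ x ∈ W, ∀ y ∈ W, B x y = 0

def IsLagrangian (B : LinearMap.BilinForm K E) (W : Submodule K E) : Prop :=
  B.IsIsotropic W ∧ 2 * finrank K W = finrank K E

theorem isIsotropic_bot : B.IsIsotropic ⊥ := by
  intro x hx y _
  rw [(mem_bot K).mp hx, map_zero, LinearMap.zero_apply]

theorem IsIsotropic.sup_span_singleton (hBalt : B.IsAlt) {W : Submodule K E} (hW : B.IsIsotropic W)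
    {v : E} (hv : v ∈ B.orthogonal W) : B.IsIsotropic (W ⊔ K ∙ v) := by
  have hvW : ∀ w ∈ W, B w v = 0 := fun w hw => mem_orthogonal_iff.mp hv w hw
  have hWv : ∀ w ∈ W, B v w = 0 := fun w hw => hBalt.eq_iff.mp (hvW w hw)
  intro x hx y hy
  obtain ⟨w, hw, _, hs, rfl⟩ := mem_sup.mp hx
  obtain ⟨w', hw', _, hs', rfl⟩ := mem_sup.mp hy
  obtain ⟨a, rfl⟩ := mem_span_singleton.mp hs
  obtain ⟨b, rfl⟩ := mem_span_singleton.mp hs'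
  simp [hW w hw w' hw', hvW w hw, hWv w' hw', hBalt v]

variable [FiniteDimensional K E]

theorem orthogonal_not_le_sup (hB : B.Nondegenerate) (hB₀ : B.IsRefl) {A W : Submodule K E}
    (hA : B.IsIsotropic A) (hAdim : finrank K E ≤ 2 * finrank K A) (hWA : Disjoint W A)
    (hW : 2 * finrank K W < finrank K E) : ¬B.orthogonal W ≤ W ⊔ A := by
  intro hle
  have hne : B.orthogonal W ⊓ A ≠ ⊥ := by
    intro hbot
    have hsum := finrank_sup_add_finrank_inf_eq (B.orthogonal W) A
    rw [hbot, finrank_bot, finrank_orthogonal hB] at hsum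
    have := finrank_le (B.orthogonal W ⊔ A)
    omega
  refine hne (eq_bot_iff.mpr (le_trans ?_ hWA.eq_bot.le))
  intro x hx
  obtain ⟨hxW, hxA⟩ := mem_inf.mp hx
  refine mem_inf.mpr ⟨?_, hxA⟩
  rw [← orthogonal_orthogonal hB hB₀ W, mem_orthogonal_iff]
  intro y hy
  obtain ⟨w, hw, a, ha, rfl⟩ := mem_sup.mp (hle hy)
  rw [map_add, LinearMap.add_apply, mem_orthogonal_iff.mp hxW w hw, hA a ha x hxA, add_zero]

theorem IsIsotropic.exists_finrank_succ (hB : B.Nondegenerate) (hBalt : B.IsAlt)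
    {A A' W : Submodule K E} (hA : B.IsLagrangian A) (hA' : B.IsLagrangian A')
    (hW : B.IsIsotropic W) (hWA : Disjoint W A) (hWA' : Disjoint W A')
    (hdim : 2 * finrank K W < finrank K E) :
    ∃ W' : Submodule K E, B.IsIsotropic W' ∧ finrank K W' = finrank K W + 1 ∧
      Disjoint W' A ∧ Disjoint W' A' := by
  obtain ⟨v, hvW, hvA, hvA'⟩ := exists_mem_notMem_notMem_of_not_le
    (orthogonal_not_le_sup hB hBalt.isRefl hA.1 hA.2.ge hWA hdim)
    (orthogonal_not_le_sup hB hBalt.isRefl hA'.1 hA'.2.ge hWA' hdim)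
  exact ⟨W ⊔ K ∙ v, hW.sup_span_singleton hBalt hvW,
    finrank_sup_span_singleton fun hv => hvA (mem_sup_left hv),
    disjoint_sup_span_singleton hWA hvA, disjoint_sup_span_singleton hWA' hvA'⟩

theorem exists_isIsotropic_disjoint_of_le_finrank (hB : B.Nondegenerate) (hBalt : B.IsAlt)
    {A A' : Submodule K E} (hA : B.IsLagrangian A) (hA' : B.IsLagrangian A') :
    ∀ k ≤ finrank K A, ∃ W : Submodule K E, B.IsIsotropic W ∧ finrank K W = k ∧
      Disjoint W A ∧ Disjoint W A'
  | 0, _ => ⟨⊥, isIsotropic_bot, finrank_bot K E, disjoint_bot_left, disjoint_bot_left⟩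
  | k + 1, hk => by
    obtain ⟨W, hW, rfl, hWA, hWA'⟩ := exists_isIsotropic_disjoint_of_le_finrank hB hBalt hA hA' k
      (Nat.le_of_succ_le hk)
    exact hW.exists_finrank_succ hB hBalt hA hA' hWA hWA' (by have := hA.2; omega)

theorem exists_isLagrangian_disjoint_disjoint (hB : B.Nondegenerate) (hBalt : B.IsAlt)
    {A A' : Submodule K E} (hA : B.IsLagrangian A) (hA' : B.IsLagrangian A') :
    ∃ C : Submodule K E, B.IsLagrangian C ∧ Disjoint C A ∧ Disjoint C A' := by
  obtain ⟨C, hC, hCdim, hCA, hCA'⟩ :=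
    exists_isIsotropic_disjoint_of_le_finrank hB hBalt hA hA' _ le_rfl
  exact ⟨C, ⟨hC, hCdim ▸ hA.2⟩, hCA, hCA'⟩

end LinearMap.BilinForm

/-- In a finite-dimensional complex symplectic vector space `(E, ω)`,
given two Lagrangian subspaces `A`, `B` there exists a Lagrangian subspace `C`
transversal to both. -/
theorem stmt11 (E : Type*) [AddCommGroup E] [Module ℂ E] [FiniteDimensional ℂ E]
    (ω : E →ₗ[ℂ] E →ₗ[ℂ] ℂ)
    (halt : ∀ x, ω x x = 0)
    (hnd : ∀ x, (∀ y, ω x y = 0) → x = 0)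
    (A B : Submodule ℂ E)
    (hA : (∀ x ∈ A, ∀ y ∈ A, ω x y = 0) ∧
      2 * Module.finrank ℂ A = Module.finrank ℂ E)
    (hB : (∀ x ∈ B, ∀ y ∈ B, ω x y = 0) ∧
      2 * Module.finrank ℂ B = Module.finrank ℂ E) :
    ∃ C : Submodule ℂ E,
      ((∀ x ∈ C, ∀ y ∈ C, ω x y = 0) ∧
        2 * Module.finrank ℂ C = Module.finrank ℂ E) ∧
      C ⊓ A = ⊥ ∧ C ⊓ B = ⊥ := by
  have hnondeg : ω.Nondegenerate :=
    (LinearMap.IsAlt.isRefl halt).nondegenerate_iff_separatingLeft.mpr hnd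
  obtain ⟨C, hC, hCA, hCB⟩ :=
    LinearMap.BilinForm.exists_isLagrangian_disjoint_disjoint hnondeg halt hA hB
  exact ⟨C, hC, hCA.eq_bot, hCB.eq_bot⟩
end
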